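/- arXiv:1205.0231 — 2 statements merged into one kernel-verified Lean document; each statement's English description precedes it below -/
import Mathlib

section
/- The image of the set of flat triangles Tri_fl under the quotient Tri → Tri/G₃ ≅ ℂ ∪ {∞} (quotient by rotations) equals ℝ ∪ {∞}. Consequently, the preimage 𝒯 = β⁻¹(ℝ ∪ {∞}) ⊂ S³ under the Hopf map is a closed surface which is a circle bundle over the circle ℝ ∪ {∞} ≅ S¹. -/
open OnePoint

/-- The Hopf map `β : ℂ² → ℂ ∪ {∞}`, `β(z₁,z₂) = z₁/z₂` if `z₂ ≠ 0` and `∞` otherwise. -/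
noncomputable def hopfBeta (p : ℂ × ℂ) : OnePoint ℂ :=
  if p.2 = 0 then ∞ else (p.1 / p.2 : ℂ)

/-- The extended real line `ℝ ∪ {∞}` inside the Riemann sphere `ℂ ∪ {∞}`. -/
def extReal : Set (OnePoint ℂ) := {w | w = ∞ ∨ ∃ r : ℝ, w = ((r : ℂ) : OnePoint ℂ)}

/-- The unit sphere `S³ ⊂ ℂ²`. -/
def sphere3 : Set (ℂ × ℂ) := {p | ‖p.1‖ ^ 2 + ‖p.2‖ ^ 2 = 1}

/-- `(z₁,z₂)` is flat when `z₁, z₂` are `ℝ`-linearly dependent. -/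
def isFlatPair (p : ℂ × ℂ) : Prop := ∃ a b : ℝ, ¬(a = 0 ∧ b = 0) ∧ a • p.1 + b • p.2 = 0

lemma hopf_eq_infty {p : ℂ × ℂ} : hopfBeta p = ∞ ↔ p.2 = 0 := by
  unfold hopfBeta
  split
  · simp_all
  · simp_all [OnePoint.coe_ne_infty]

lemma hopf_eq_coe {p : ℂ × ℂ} (h : p.2 ≠ 0) {z : ℂ} :
    hopfBeta p = (z : OnePoint ℂ) ↔ p.1 = z * p.2 := by
  unfold hopfBeta
  rw [if_neg h, OnePoint.coe_eq_coe, div_eq_iff h]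

lemma fiber_infty_homeo :
    Nonempty (({p ∈ sphere3 | hopfBeta p = ∞} : Set (ℂ × ℂ)) ≃ₜ
      Metric.sphere (0 : ℂ) 1) := by
  refine ⟨{
    toFun := fun p => ⟨p.1.1, ?_⟩
    invFun := fun z => ⟨((z : ℂ), 0), ?_, ?_⟩
    left_inv := ?_
    right_inv := ?_
    continuous_toFun := ?_
    continuous_invFun := ?_ }⟩
  · obtain ⟨hs, hi⟩ := p.2
    have h2 : (p : ℂ × ℂ).2 = 0 := hopf_eq_infty.mp hi
    rw [mem_sphere_zero_iff_norm]
    have := hs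
    simp only [sphere3, Set.mem_setOf_eq, h2, norm_zero] at this
    nlinarith [norm_nonneg (p : ℂ × ℂ).1]
  · have := z.2
    rw [mem_sphere_zero_iff_norm] at this
    simp [sphere3, this]
  · exact hopf_eq_infty.mpr rfl
  · rintro ⟨⟨z₁, z₂⟩, hs, hi⟩
    have h2 : z₂ = 0 := hopf_eq_infty.mp hi
    simp [h2]
  · intro z
    rfl
  · exact ((continuous_fst.comp continuous_subtype_val).subtype_mk _)
  · exact (((continuous_subtype_val).prodMk continuous_const).subtype_mk _)

lemma fiber_coe_homeo (r : ℝ) :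
    Nonempty (({p ∈ sphere3 | hopfBeta p = ((r : ℂ) : OnePoint ℂ)} : Set (ℂ × ℂ)) ≃ₜ
      Metric.sphere (0 : ℂ) 1) := by
  set s : ℝ := Real.sqrt (r ^ 2 + 1) with hs_def
  have hs : 0 < s := Real.sqrt_pos.mpr (by positivity)
  have hs2 : s ^ 2 = r ^ 2 + 1 := Real.sq_sqrt (by positivity)
  have hsC : (s : ℂ) ≠ 0 := by exact_mod_cast hs.ne'
  have key : ∀ p : ℂ × ℂ, p ∈ sphere3 → hopfBeta p = ((r : ℂ) : OnePoint ℂ) →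
      p.1 = (r : ℂ) * p.2 ∧ ‖p.2‖ = s⁻¹ := by
    intro p hsp hp
    have h2 : p.2 ≠ 0 := by
      intro h
      rw [hopf_eq_infty.mpr h] at hp
      exact (OnePoint.infty_ne_coe _) hp
    have h1 : p.1 = (r : ℂ) * p.2 := (hopf_eq_coe h2).mp hp
    refine ⟨h1, ?_⟩
    simp only [sphere3, Set.mem_setOf_eq, h1, norm_mul, Complex.norm_real,
      Real.norm_eq_abs] at hsp
    have hn : 0 ≤ ‖p.2‖ := norm_nonneg _
    have h4 : (r ^ 2 + 1) * ‖p.2‖ ^ 2 = 1 := by nlinarith [sq_abs r]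
    have h6 : ‖p.2‖ ^ 2 = (s⁻¹) ^ 2 := by
      rw [inv_pow, hs2]
      exact eq_inv_of_mul_eq_one_left (by linarith [h4] : ‖p.2‖ ^ 2 * (r ^ 2 + 1) = 1)
    have := congrArg Real.sqrt h6
    rwa [Real.sqrt_sq hn, Real.sqrt_sq (le_of_lt (inv_pos.mpr hs))] at this
  refine ⟨{
    toFun := fun p => ⟨(s : ℂ) * p.1.2, ?_⟩
    invFun := fun u => ⟨((r : ℂ) / s * u, (s : ℂ)⁻¹ * u), ?_, ?_⟩
    left_inv := ?_
    right_inv := ?_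
    continuous_toFun := ?_
    continuous_invFun := ?_ }⟩
  · obtain ⟨h1, h2⟩ := key _ p.2.1 p.2.2
    rw [mem_sphere_zero_iff_norm, norm_mul, Complex.norm_real, Real.norm_eq_abs,
      abs_of_pos hs, h2]
    field_simp
  · have hu : ‖(u : ℂ)‖ = 1 := mem_sphere_zero_iff_norm.mp u.2
    simp only [sphere3, Set.mem_setOf_eq, norm_mul, norm_div, norm_inv,
      Complex.norm_real, Real.norm_eq_abs, hu, abs_of_pos hs, mul_one]
    field_simp
    nlinarith [sq_abs r]
  · have hu : ‖(u : ℂ)‖ = 1 := mem_sphere_zero_iff_norm.mp u.2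
    have hu0 : (u : ℂ) ≠ 0 := by
      intro h
      rw [h, norm_zero] at hu
      norm_num at hu
    rw [hopf_eq_coe (mul_ne_zero (inv_ne_zero hsC) hu0)]
    field_simp
  · rintro ⟨⟨z₁, z₂⟩, hsp, hp⟩
    obtain ⟨h1, h2⟩ := key _ hsp hp
    simp only at h1 ⊢
    apply Subtype.ext
    simp only [Prod.mk.injEq]
    constructor
    · rw [h1]; field_simp
    · field_simp
  · intro u
    apply Subtype.ext
    simp only
    field_simp
  · exact (((continuous_const.mul ((continuous_snd.comp continuous_subtype_val)))).subtype_mk _)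
  · exact (((continuous_const.mul continuous_subtype_val).prodMk
      (continuous_const.mul continuous_subtype_val)).subtype_mk _)

/-- The image of the flat triangles under the Hopf map on `S³` equals `ℝ ∪ {∞}`; the
preimage `𝒯 = β⁻¹(ℝ ∪ {∞}) ∩ S³` is a closed subset of `S³` whose fiber over each point of
the circle `ℝ ∪ {∞}` is a circle (a circle bundle over `S¹ ≅ ℝ ∪ {∞}`). -/
theorem stmt_3 :
    hopfBeta '' {p ∈ sphere3 | isFlatPair p} = extReal ∧
    IsClosed {p ∈ sphere3 | hopfBeta p ∈ extReal} ∧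
    ∀ w ∈ extReal,
      Nonempty (({p ∈ sphere3 | hopfBeta p = w} : Set (ℂ × ℂ)) ≃ₜ
        Metric.sphere (0 : ℂ) 1) := by
  refine ⟨?_, ?_, ?_⟩
  · -- image equals extReal
    ext w
    constructor
    · rintro ⟨p, ⟨hs, a, b, hab, hlin⟩, rfl⟩
      by_cases h2 : p.2 = 0
      · exact Or.inl (hopf_eq_infty.mpr h2)
      · have ha : a ≠ 0 := by
          rintro rfl
          simp only [zero_smul, zero_add, smul_eq_zero] at hlin
          rcases hlin with hb | h
          · exact hab ⟨rfl, hb⟩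
          · exact h2 h
        refine Or.inr ⟨-b / a, ?_⟩
        rw [hopf_eq_coe h2]
        have hlin' : (a : ℂ) * p.1 + (b : ℂ) * p.2 = 0 := by
          simpa [Complex.real_smul] using hlin
        have haC : (a : ℂ) ≠ 0 := by exact_mod_cast ha
        push_cast
        field_simp
        linear_combination hlin'
    · rintro (rfl | ⟨r, rfl⟩)
      · refine ⟨(1, 0), ⟨?_, 0, 1, by simp, by simp⟩, hopf_eq_infty.mpr rfl⟩
        simp [sphere3]
      · set s : ℝ := Real.sqrt (r ^ 2 + 1) with hs_def
        have hs : 0 < s := Real.sqrt_pos.mpr (by positivity)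
        have hs2 : s ^ 2 = r ^ 2 + 1 := Real.sq_sqrt (by positivity)
        have hsC : (s : ℂ) ≠ 0 := by exact_mod_cast hs.ne'
        refine ⟨((r : ℂ) / s, (s : ℂ)⁻¹), ⟨?_, 1, -r, by simp, ?_⟩, ?_⟩
        · simp only [sphere3, Set.mem_setOf_eq, norm_div, norm_inv, Complex.norm_real,
            Real.norm_eq_abs, abs_of_pos hs]
          field_simp
          nlinarith [sq_abs r]
        · simp only [Complex.real_smul]
          push_cast
          field_simp
          ring
        · rw [hopf_eq_coe (by simpa using hsC)]
          field_simp
  · -- closedness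
    have : {p ∈ sphere3 | hopfBeta p ∈ extReal} =
        sphere3 ∩ {p : ℂ × ℂ | (p.1 * (starRingEnd ℂ) p.2).im = 0} := by
      ext p
      simp only [Set.mem_setOf_eq, Set.mem_inter_iff, Set.mem_sep_iff]
      refine and_congr_right fun hs => ?_
      by_cases h2 : p.2 = 0
      · simp [h2, extReal, hopf_eq_infty.mpr h2]
      · constructor
        · rintro (h | ⟨r, hr⟩)
          · exact absurd (hopf_eq_infty.mp h) h2
          · rw [hopf_eq_coe h2] at hr
            rw [hr]
            simp only [Complex.mul_im, Complex.mul_re, Complex.conj_re,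
              Complex.conj_im, Complex.ofReal_re, Complex.ofReal_im]
            ring
        · intro him
          refine Or.inr ⟨(p.1 / p.2).re, ?_⟩
          rw [hopf_eq_coe h2]
          have hn : Complex.normSq p.2 ≠ 0 := by
            simpa [Complex.normSq_eq_zero] using h2
          have hd : (p.1 / p.2).im = 0 := by
            rw [Complex.div_im]
            rw [Complex.mul_im, Complex.conj_re, Complex.conj_im] at him
            field_simp
            linarith [him]
          have : p.1 / p.2 = ((p.1 / p.2).re : ℂ) := by
            apply Complex.ext <;> simp [hd]
          rw [← this, div_mul_cancel₀ _ h2]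
    rw [this]
    refine IsClosed.inter ?_ ?_
    · have : sphere3 = (fun p : ℂ × ℂ => ‖p.1‖ ^ 2 + ‖p.2‖ ^ 2) ⁻¹' {1} := rfl
      rw [this]
      exact isClosed_singleton.preimage (by fun_prop)
    · exact isClosed_eq (by fun_prop) continuous_const
  · -- fibers are circles
    rintro w (rfl | ⟨r, rfl⟩)
    · exact fiber_infty_homeo
    · exact fiber_coe_homeo r
end

section
/- The subset 𝒯 = {(z₁,z₂) ∈ S³ ⊂ ℂ² : z₁ and z₂ are ℝ-linearly dependent} is a 2-dimensional closed submanifold of S³ homeomorphic to a 2-torus, and S³ \ 𝒯 has exactly two connected components. -/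
open Complex

/-- The torus `𝒯 ⊂ S³` of points `(z₁,z₂)` with `z₁, z₂` `ℝ`-linearly dependent. -/
def torusT : Set (ℂ × ℂ) :=
  {p ∈ sphere3 | ∃ a b : ℝ, ¬(a = 0 ∧ b = 0) ∧ a • p.1 + b • p.2 = 0}

def dfun (p : ℂ × ℂ) : ℝ := p.1.re * p.2.im - p.1.im * p.2.re

lemma norm_sq_eq (z : ℂ) : ‖z‖ ^ 2 = z.re ^ 2 + z.im ^ 2 := by
  rw [Complex.sq_norm, Complex.normSq_apply]; ring

lemma mem_sphere3 (p : ℂ × ℂ) :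
    p ∈ sphere3 ↔ p.1.re ^ 2 + p.1.im ^ 2 + p.2.re ^ 2 + p.2.im ^ 2 = 1 := by
  simp only [sphere3, Set.mem_setOf_eq, norm_sq_eq]; constructor <;> intro h <;> linarith

lemma mem_torusT (p : ℂ × ℂ) : p ∈ torusT ↔ p ∈ sphere3 ∧ dfun p = 0 := by
  constructor
  · rintro ⟨hs, a, b, hab, h⟩
    refine ⟨hs, ?_⟩
    have hre := congrArg Complex.re h
    have him := congrArg Complex.im h
    simp only [Complex.add_re, Complex.add_im, Complex.smul_re, Complex.smul_im,
      Complex.zero_re, Complex.zero_im, smul_eq_mul] at hre him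
    rcases not_and_or.mp hab with ha | hb
    · have : a * dfun p = 0 := by unfold dfun; linear_combination p.2.im * hre - p.2.re * him
      rcases mul_eq_zero.mp this with h' | h'
      · exact absurd h' ha
      · exact h'
    · have : b * dfun p = 0 := by unfold dfun; linear_combination p.1.re * him - p.1.im * hre
      rcases mul_eq_zero.mp this with h' | h'
      · exact absurd h' hb
      · exact h'
  · rintro ⟨hs, hd⟩
    refine ⟨hs, ?_⟩
    by_cases hz : p.1 = 0
    · exact ⟨1, 0, by simp, by simp [hz]⟩
    · refine ⟨p.1.re * p.2.re + p.1.im * p.2.im, -(p.1.re ^ 2 + p.1.im ^ 2), ?_, ?_⟩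
      · rintro ⟨-, hb⟩
        have h1 : p.1.re ^ 2 + p.1.im ^ 2 = 0 := by linarith
        have h2 := Complex.normSq_pos.mpr hz
        rw [Complex.normSq_apply] at h2
        nlinarith
      · unfold dfun at hd
        apply Complex.ext
        · simp only [Complex.add_re, Complex.smul_re, Complex.zero_re, smul_eq_mul]
          linear_combination p.1.im * hd
        · simp only [Complex.add_im, Complex.smul_im, Complex.zero_im, smul_eq_mul]
          linear_combination (-p.1.re) * hd

lemma isClosed_torusT : IsClosed torusT := by
  have : torusT = {p : ℂ × ℂ | ‖p.1‖ ^ 2 + ‖p.2‖ ^ 2 = 1} ∩ {p | dfun p = 0} := by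
    ext p; rw [mem_torusT]; rfl
  rw [this]
  exact (isClosed_eq (by fun_prop) continuous_const).inter
    (isClosed_eq (by unfold dfun; fun_prop) continuous_const)

lemma norm_eq_one_iff (z : ℂ) : ‖z‖ = 1 ↔ z.re ^ 2 + z.im ^ 2 = 1 := by
  rw [← norm_sq_eq]
  constructor
  · intro h; rw [h]; norm_num
  · intro h; nlinarith [norm_nonneg z]

lemma mem_circle_iff (z : ℂ) : z ∈ Metric.sphere (0 : ℂ) 1 ↔ z.re ^ 2 + z.im ^ 2 = 1 := by
  rw [mem_sphere_zero_iff_norm, _root_.norm_eq_one_iff]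

noncomputable def torusHomeo :
    (torusT : Set (ℂ × ℂ)) ≃ₜ (Metric.sphere (0 : ℂ) 1 × Metric.sphere (0 : ℂ) 1) where
  toFun p :=
    (⟨p.1.1 + I * p.1.2, by
        have h := (mem_torusT p.1).mp p.2
        rw [mem_sphere3] at h
        rcases h with ⟨hs, hd⟩
        unfold dfun at hd
        rw [mem_circle_iff]
        simp only [Complex.add_re, Complex.add_im, Complex.mul_re, Complex.mul_im,
          Complex.I_re, Complex.I_im]
        nlinarith⟩,
     ⟨p.1.1 - I * p.1.2, by
        have h := (mem_torusT p.1).mp p.2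
        rw [mem_sphere3] at h
        rcases h with ⟨hs, hd⟩
        unfold dfun at hd
        rw [mem_circle_iff]
        simp only [Complex.sub_re, Complex.sub_im, Complex.mul_re, Complex.mul_im,
          Complex.I_re, Complex.I_im]
        nlinarith⟩)
  invFun q :=
    ⟨((q.1.1 + q.2.1) / 2, I * (q.2.1 - q.1.1) / 2), by
      have hu := (mem_circle_iff q.1.1).mp q.1.2
      have hv := (mem_circle_iff q.2.1).mp q.2.2
      rw [mem_torusT, mem_sphere3]
      unfold dfun
      constructor
      · simp only [Complex.add_re, Complex.add_im, Complex.sub_re, Complex.sub_im,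
          Complex.mul_re, Complex.mul_im, Complex.I_re, Complex.I_im, Complex.div_re,
          Complex.div_im, Complex.normSq_apply, Complex.re_ofNat, Complex.im_ofNat]
        nlinarith
      · simp only [Complex.add_re, Complex.add_im, Complex.sub_re, Complex.sub_im,
          Complex.mul_re, Complex.mul_im, Complex.I_re, Complex.I_im, Complex.div_re,
          Complex.div_im, Complex.normSq_apply, Complex.re_ofNat, Complex.im_ofNat]
        nlinarith⟩
  left_inv p := by
    apply Subtype.ext
    apply Prod.ext
    · show (p.1.1 + I * p.1.2 + (p.1.1 - I * p.1.2)) / 2 = p.1.1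
      ring
    · show I * (p.1.1 - I * p.1.2 - (p.1.1 + I * p.1.2)) / 2 = p.1.2
      linear_combination (-p.1.2) * Complex.I_mul_I
  right_inv q := by
    apply Prod.ext <;> apply Subtype.ext
    · show (q.1.1 + q.2.1) / 2 + I * (I * (q.2.1 - q.1.1) / 2) = q.1.1
      linear_combination ((q.2.1 - q.1.1) / 2) * Complex.I_mul_I
    · show (q.1.1 + q.2.1) / 2 - I * (I * (q.2.1 - q.1.1) / 2) = q.2.1
      linear_combination ((q.1.1 - q.2.1) / 2) * Complex.I_mul_I
  continuous_toFun := by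
    apply Continuous.prodMk <;> apply Continuous.subtype_mk <;> fun_prop
  continuous_invFun := by
    apply Continuous.subtype_mk
    fun_prop

def setA : Set (ℂ × ℂ) := {p | p ∈ sphere3 ∧ dfun p < 0}
def setB : Set (ℂ × ℂ) := {p | p ∈ sphere3 ∧ 0 < dfun p}

lemma diff_eq : sphere3 \ torusT = setA ∪ setB := by
  ext p
  simp only [Set.mem_diff, mem_torusT, Set.mem_union, setA, setB, Set.mem_setOf_eq]
  constructor
  · rintro ⟨hs, h⟩
    rcases lt_trichotomy (dfun p) 0 with h' | h' | h'
    · exact Or.inl ⟨hs, h'⟩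
    · exact absurd ⟨hs, h'⟩ h
    · exact Or.inr ⟨hs, h'⟩
  · rintro (⟨hs, h⟩ | ⟨hs, h⟩) <;> exact ⟨hs, fun hh => by linarith [hh.2]⟩

noncomputable def Fmap (q : ℂ × ℂ) : ℂ × ℂ :=
  ((((Real.sqrt (2 - ‖q.2‖ ^ 2) : ℝ) : ℂ) * q.1 + q.2) / 2,
    I * (q.2 - (((Real.sqrt (2 - ‖q.2‖ ^ 2) : ℝ) : ℂ) * q.1)) / 2)

lemma setA_eq_image :
    setA = Fmap '' (Metric.sphere (0 : ℂ) 1 ×ˢ Metric.ball (0 : ℂ) 1) := by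
  ext p
  constructor
  · rintro ⟨hs, hd⟩
    rw [mem_sphere3] at hs
    unfold dfun at hd
    set u : ℂ := p.1 + I * p.2 with hu_def
    set v : ℂ := p.1 - I * p.2 with hv_def
    have hu2 : ‖u‖ ^ 2 = 1 - 2 * dfun p := by
      rw [norm_sq_eq]
      simp only [hu_def, Complex.add_re, Complex.add_im, Complex.mul_re, Complex.mul_im,
        Complex.I_re, Complex.I_im]
      unfold dfun; nlinarith
    have hv2 : ‖v‖ ^ 2 = 1 + 2 * dfun p := by
      rw [norm_sq_eq]
      simp only [hv_def, Complex.sub_re, Complex.sub_im, Complex.mul_re, Complex.mul_im,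
        Complex.I_re, Complex.I_im]
      unfold dfun; nlinarith
    have hc : Real.sqrt (2 - ‖v‖ ^ 2) = ‖u‖ := by
      rw [hv2]
      have : 2 - (1 + 2 * dfun p) = ‖u‖ ^ 2 := by rw [hu2]; ring
      rw [this, Real.sqrt_sq (norm_nonneg u)]
    have hune : u ≠ 0 := by
      intro h
      rw [h, norm_zero] at hu2
      unfold dfun at hu2
      nlinarith
    have hnu : ‖u‖ ≠ 0 := norm_ne_zero_iff.mpr hune
    refine ⟨(u / (‖u‖ : ℂ), v), ⟨?_, ?_⟩, ?_⟩
    · rw [mem_sphere_zero_iff_norm, norm_div, Complex.norm_real, norm_norm]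
      exact div_self hnu
    · rw [Metric.mem_ball, dist_zero_right]
      show ‖v‖ < 1
      have hd' : dfun p < 0 := hd
      nlinarith [norm_nonneg v]
    · show Fmap (u / (‖u‖ : ℂ), v) = p
      unfold Fmap
      simp only
      rw [hc]
      have hue : (‖u‖ : ℂ) * (u / (‖u‖ : ℂ)) = u := by
        rw [mul_div_cancel₀]
        exact_mod_cast hnu
      rw [hue]
      apply Prod.ext
      · show (u + v) / 2 = p.1
        simp only [hu_def, hv_def]; ring
      · show I * (v - u) / 2 = p.2
        simp only [hu_def, hv_def]
        linear_combination (-p.2) * Complex.I_mul_I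
  · rintro ⟨⟨e, v⟩, ⟨he, hv⟩, rfl⟩
    rw [mem_sphere_zero_iff_norm] at he
    rw [Metric.mem_ball, dist_zero_right] at hv
    have he2 : e.re ^ 2 + e.im ^ 2 = 1 := by rw [← norm_sq_eq, he]; norm_num
    have hv2 : v.re ^ 2 + v.im ^ 2 < 1 := by
      rw [← norm_sq_eq]; nlinarith [norm_nonneg v]
    have hv2' : (0:ℝ) ≤ v.re ^ 2 + v.im ^ 2 := by positivity
    set c : ℝ := Real.sqrt (2 - ‖v‖ ^ 2) with hc_def
    have hc2 : c ^ 2 = 2 - (v.re ^ 2 + v.im ^ 2) := by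
      rw [hc_def, Real.sq_sqrt, norm_sq_eq]
      rw [norm_sq_eq]; linarith
    constructor
    · rw [mem_sphere3]
      unfold Fmap
      simp only [Complex.div_re, Complex.div_im, Complex.add_re, Complex.add_im,
        Complex.sub_re, Complex.sub_im, Complex.mul_re, Complex.mul_im,
        Complex.I_re, Complex.I_im, Complex.ofReal_re, Complex.ofReal_im,
        Complex.normSq_apply, Complex.re_ofNat, Complex.im_ofNat]
      nlinarith
    · unfold Fmap dfun
      simp only [Complex.div_re, Complex.div_im, Complex.add_re, Complex.add_im,
        Complex.sub_re, Complex.sub_im, Complex.mul_re, Complex.mul_im,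
        Complex.I_re, Complex.I_im, Complex.ofReal_re, Complex.ofReal_im,
        Complex.normSq_apply, Complex.re_ofNat, Complex.im_ofNat]
      nlinarith

lemma continuous_dfun : Continuous dfun := by unfold dfun; fun_prop

lemma isConnected_setA : IsConnected setA := by
  rw [setA_eq_image]
  apply IsConnected.image
  · exact (isConnected_sphere (by rw [rank_real_complex]; norm_num) 0 zero_le_one).prod
      ((convex_ball (0 : ℂ) 1).isConnected (Metric.nonempty_ball.mpr one_pos))
  · apply Continuous.continuousOn
    unfold Fmap
    fun_prop

def conjMap (p : ℂ × ℂ) : ℂ × ℂ := ((starRingEnd ℂ) p.1, (starRingEnd ℂ) p.2)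

lemma conjMap_mem (p : ℂ × ℂ) : conjMap p ∈ setA ↔ p ∈ setB := by
  simp only [setA, setB, Set.mem_setOf_eq, conjMap, mem_sphere3, dfun, Complex.conj_re,
    Complex.conj_im]
  constructor
  · rintro ⟨h1, h2⟩; exact ⟨by linarith, by linarith⟩
  · rintro ⟨h1, h2⟩; exact ⟨by linarith, by linarith⟩

lemma conjMap_invol (p : ℂ × ℂ) : conjMap (conjMap p) = p := by simp [conjMap]

lemma setB_eq : setB = conjMap '' setA := by
  ext p
  constructor
  · intro hp
    exact ⟨conjMap p, (conjMap_mem p).mpr hp, conjMap_invol p⟩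
  · rintro ⟨q, hq, rfl⟩
    have h := conjMap_mem (conjMap q)
    rw [conjMap_invol] at h
    exact h.mp hq

lemma continuous_conjMap : Continuous conjMap :=
  (Complex.continuous_conj.comp continuous_fst).prodMk (Complex.continuous_conj.comp continuous_snd)

lemma isConnected_setB : IsConnected setB := by
  rw [setB_eq]
  exact isConnected_setA.image _ continuous_conjMap.continuousOn

abbrev Xsp := (sphere3 \ torusT : Set (ℂ × ℂ))

lemma dfun_ne (p : Xsp) : dfun p.val ≠ 0 := fun h =>
  p.2.2 ((mem_torusT p.val).mpr ⟨p.2.1, h⟩)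

noncomputable def gB : Xsp → Bool := fun p => decide (0 < dfun p.val)

lemma gB_preim_true : gB ⁻¹' {true} = Subtype.val ⁻¹' setB := by
  ext p
  simp only [gB, Set.mem_preimage, Set.mem_singleton_iff, decide_eq_true_eq, setB,
    Set.mem_setOf_eq]
  exact ⟨fun h => ⟨p.2.1, h⟩, fun h => h.2⟩

lemma gB_preim_false : gB ⁻¹' {false} = Subtype.val ⁻¹' setA := by
  ext p
  simp only [gB, Set.mem_preimage, Set.mem_singleton_iff, decide_eq_false_iff_not, not_lt,
    setA, Set.mem_setOf_eq]
  constructor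
  · intro h
    exact ⟨p.2.1, lt_of_le_of_ne h (dfun_ne p)⟩
  · intro h; exact le_of_lt h.2

lemma preimA_eq : (Subtype.val : Xsp → ℂ × ℂ) ⁻¹' setA = Subtype.val ⁻¹' {q | dfun q < 0} := by
  ext p
  exact ⟨fun h => h.2, fun h => ⟨p.2.1, h⟩⟩

lemma preimB_eq : (Subtype.val : Xsp → ℂ × ℂ) ⁻¹' setB = Subtype.val ⁻¹' {q | 0 < dfun q} := by
  ext p
  exact ⟨fun h => h.2, fun h => ⟨p.2.1, h⟩⟩

lemma continuous_gB : Continuous gB := by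
  rw [continuous_discrete_rng]
  intro b
  cases b
  · rw [gB_preim_false, preimA_eq]
    exact (isOpen_lt continuous_dfun continuous_const).preimage continuous_subtype_val
  · rw [gB_preim_true, preimB_eq]
    exact (isOpen_lt continuous_const continuous_dfun).preimage continuous_subtype_val

lemma preconn_preimA : IsPreconnected ((Subtype.val : Xsp → ℂ × ℂ) ⁻¹' setA) := by
  rw [← Topology.IsInducing.subtypeVal.isPreconnected_image]
  have : Subtype.val '' ((Subtype.val : Xsp → ℂ × ℂ) ⁻¹' setA) = setA := by
    rw [Set.image_preimage_eq_inter_range, Subtype.range_val]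
    show setA ∩ (sphere3 \ torusT) = setA
    rw [diff_eq]
    exact Set.inter_eq_self_of_subset_left Set.subset_union_left
  rw [this]
  exact isConnected_setA.isPreconnected

lemma preconn_preimB : IsPreconnected ((Subtype.val : Xsp → ℂ × ℂ) ⁻¹' setB) := by
  rw [← Topology.IsInducing.subtypeVal.isPreconnected_image]
  have : Subtype.val '' ((Subtype.val : Xsp → ℂ × ℂ) ⁻¹' setB) = setB := by
    rw [Set.image_preimage_eq_inter_range, Subtype.range_val]
    show setB ∩ (sphere3 \ torusT) = setB
    rw [diff_eq]
    exact Set.inter_eq_self_of_subset_left Set.subset_union_right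
  rw [this]
  exact isConnected_setB.isPreconnected

noncomputable def pA : ℂ × ℂ := ((3/5 : ℂ), -(4/5) * I)
noncomputable def pB : ℂ × ℂ := ((3/5 : ℂ), (4/5) * I)

lemma pA_mem : pA ∈ setA := by
  constructor
  · rw [mem_sphere3]
    norm_num [pA]
  · norm_num [pA, dfun]

lemma pB_mem : pB ∈ setB := by
  constructor
  · rw [mem_sphere3]
    norm_num [pB]
  · norm_num [pB, dfun]

noncomputable def componentsEquiv : ConnectedComponents Xsp ≃ Fin 2 := by
  refine (Equiv.ofBijective continuous_gB.connectedComponentsLift ⟨?_, ?_⟩).trans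
    finTwoEquiv.symm
  · intro c₁ c₂ h
    obtain ⟨x, rfl⟩ := ConnectedComponents.surjective_coe c₁
    obtain ⟨y, rfl⟩ := ConnectedComponents.surjective_coe c₂
    simp only [Continuous.connectedComponentsLift_apply_coe] at h
    rw [ConnectedComponents.coe_eq_coe]
    rcases hb : gB y with hf | ht
    · have hx : x ∈ gB ⁻¹' {false} := by rw [Set.mem_preimage, Set.mem_singleton_iff, h, hb]
      have hy : y ∈ gB ⁻¹' {false} := by rw [Set.mem_preimage, Set.mem_singleton_iff, hb]
      rw [gB_preim_false] at hx hy
      have hsub := preconn_preimA.subset_connectedComponent hy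
      exact (connectedComponent_eq (hsub hx)).symm
    · have hx : x ∈ gB ⁻¹' {true} := by rw [Set.mem_preimage, Set.mem_singleton_iff, h, hb]
      have hy : y ∈ gB ⁻¹' {true} := by rw [Set.mem_preimage, Set.mem_singleton_iff, hb]
      rw [gB_preim_true] at hx hy
      have hsub := preconn_preimB.subset_connectedComponent hy
      exact (connectedComponent_eq (hsub hx)).symm
  · intro b
    cases b
    · refine ⟨(⟨pA, ?_⟩ : Xsp), ?_⟩
      · show pA ∈ sphere3 \ torusT
        rw [diff_eq]; exact Or.inl pA_mem
      · simp only [Continuous.connectedComponentsLift_apply_coe, gB]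
        simp [not_lt.mpr (le_of_lt pA_mem.2)]
    · refine ⟨(⟨pB, ?_⟩ : Xsp), ?_⟩
      · show pB ∈ sphere3 \ torusT
        rw [diff_eq]; exact Or.inr pB_mem
      · simp only [Continuous.connectedComponentsLift_apply_coe, gB]
        simp [pB_mem.2]

/-- `𝒯` is a closed subset of `S³` homeomorphic to the 2-torus `S¹ × S¹`, and its
complement `S³ \ 𝒯` has exactly two connected components. -/
theorem stmt_4 :
    IsClosed torusT ∧
    Nonempty ((torusT : Set (ℂ × ℂ)) ≃ₜ
      (Metric.sphere (0 : ℂ) 1 × Metric.sphere (0 : ℂ) 1)) ∧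
    Nonempty (ConnectedComponents ((sphere3 \ torusT : Set (ℂ × ℂ))) ≃ Fin 2) := by
  exact ⟨isClosed_torusT, ⟨torusHomeo⟩, ⟨componentsEquiv⟩⟩
end
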